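/- For a path graph P_n with n ≥ 2 vertices and n even, the line completion number of P_n equals n/2. -/

import Mathlib

/-!
Index the edges of `P_n` by `0, …, n - 2`. If two `r`-sets of edges with index sets `S` and `T`
are not adjacent in `L_r(P_n)`, then no element of `S` is followed by an element of `T` and vice
versa, so `S` and `T + 1` are disjoint subsets of `{0, …, n - 1}`. When `n ≤ 2r` this forces
`S ⊔ (T + 1)` and `T ⊔ (S + 1)` to fill `{0, …, n - 1}`; hence `0 ∈ S ∩ T`, and walking up from `0`
the memberships in `S` and in `T` agree, i.e. `S = T`. Conversely, for `2r + 1 < n` the first `r`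
and the last `r` edges of the path share no vertex.
-/

open SimpleGraph

def shareVertex {V : Type*} (e f : Sym2 V) : Prop := ∃ v, v ∈ e ∧ v ∈ f

def SuperLineComplete {V : Type*} (G : SimpleGraph V) (r : ℕ) : Prop :=
  ∀ A B : Finset (Sym2 V), ↑A ⊆ G.edgeSet → ↑B ⊆ G.edgeSet →
    A.card = r → B.card = r → A ≠ B →
    ∃ e ∈ A, ∃ f ∈ B, e ≠ f ∧ shareVertex e f

def lcIs {V : Type*} (G : SimpleGraph V) (k : ℕ) : Prop :=
  IsLeast {r : ℕ | 0 < r ∧ SuperLineComplete G r} k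

def gridGraph (n m : ℕ) : SimpleGraph (Fin n × Fin m) :=
  (pathGraph n).boxProd (pathGraph m)

open Finset

namespace Finset

theorem union_image_add_one_eq_range {m : ℕ} {S T : Finset ℕ} (hS : S ⊆ range m)
    (hT : T ⊆ range m) (hcard : m < #S + #T) (hTS : ∀ i ∈ T, i + 1 ∉ S) :
    S ∪ T.image (· + 1) = range (m + 1) := by
  have hsub : S ∪ T.image (· + 1) ⊆ range (m + 1) := by
    refine union_subset (hS.trans (range_subset_range.2 m.le_succ)) ?_
    intro j hj
    obtain ⟨i, hi, rfl⟩ := mem_image.1 hj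
    simpa using hT hi
  have hdisj : Disjoint S (T.image (· + 1)) := by
    rw [disjoint_left]
    intro j hjS hjT
    obtain ⟨i, hi, rfl⟩ := mem_image.1 hjT
    exact hTS i hi hjS
  refine eq_of_subset_of_card_le hsub ?_
  rw [card_union_of_disjoint hdisj, card_image_of_injective _ (add_left_injective 1), card_range]
  omega

theorem eq_of_add_one_notMem_of_lt_card_add_card {m : ℕ} {S T : Finset ℕ} (hS : S ⊆ range m)
    (hT : T ⊆ range m) (hcard : m < #S + #T) (hST : ∀ i ∈ S, i + 1 ∉ T)
    (hTS : ∀ i ∈ T, i + 1 ∉ S) : S = T := by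
  have coverS := union_image_add_one_eq_range hS hT hcard hTS
  have coverT := union_image_add_one_eq_range hT hS (by omega) hST
  have covered : ∀ j ≤ m, (j ∈ S ∨ ∃ i ∈ T, i + 1 = j) ∧ (j ∈ T ∨ ∃ i ∈ S, i + 1 = j) := by
    intro j hj
    have hjS : j ∈ S ∪ T.image (· + 1) := coverS ▸ mem_range.2 (Nat.lt_succ_of_le hj)
    have hjT : j ∈ T ∪ S.image (· + 1) := coverT ▸ mem_range.2 (Nat.lt_succ_of_le hj)
    simpa only [mem_union, mem_image] using And.intro hjS hjT
  ext j
  induction j with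
  | zero =>
    obtain ⟨h0S | ⟨i, -, hi⟩, h0T | ⟨i', -, hi'⟩⟩ := covered 0 (Nat.zero_le m) <;>
      first | omega | exact iff_of_true h0S h0T
  | succ j ih =>
    by_cases hjS : j ∈ S
    · simp [hST j hjS, hTS j (ih.1 hjS)]
    · have hjT : j ∉ T := mt ih.2 hjS
      by_cases hjm : j + 1 ≤ m
      · obtain ⟨hS', hT'⟩ := covered (j + 1) hjm
        simp only [add_left_inj, exists_eq_right, hjS, hjT, or_false] at hS' hT'
        exact iff_of_true hS' hT'
      · have hout : ∀ U ⊆ range m, j + 1 ∉ U := fun U hU hj => hjm (mem_range.1 (hU hj)).le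
        simp [hout S hS, hout T hT]

end Finset

theorem not_superLineComplete_of_forall_not_shareVertex {V : Type*} {G : SimpleGraph V}
    {A B : Finset (Sym2 V)} {r : ℕ} (hA : ↑A ⊆ G.edgeSet) (hB : ↑B ⊆ G.edgeSet)
    (hAr : #A = r) (hBr : #B = r) (hr : 0 < r) (h : ∀ e ∈ A, ∀ f ∈ B, ¬ shareVertex e f) :
    ¬ SuperLineComplete G r := by
  intro hG
  have hAB : A ≠ B := by
    rintro rfl
    obtain ⟨e, he⟩ := card_pos.1 (hAr ▸ hr)
    induction e using Sym2.ind with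
    | _ u v => exact h _ he _ he ⟨u, Sym2.mem_mk_left u v, Sym2.mem_mk_left u v⟩
  obtain ⟨e, he, f, hf, -, hef⟩ := hG A B hA hB hAr hBr hAB
  exact h e he f hf hef

section PathGraph

variable {n : ℕ} [NeZero n]

def pathEdge (n : ℕ) [NeZero n] (i : ℕ) : Sym2 (Fin n) :=
  s(Fin.ofNat n i, Fin.ofNat n (i + 1))

theorem pathEdge_mem_edgeSet {i : ℕ} (hi : i + 1 < n) :
    pathEdge n i ∈ (pathGraph n).edgeSet := by
  simp [pathEdge, pathGraph_adj, Nat.mod_eq_of_lt hi,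
    Nat.mod_eq_of_lt (show i < n by omega)]

theorem val_mem_pathEdge {i : ℕ} {v : Fin n} (hi : i + 1 < n) (hv : v ∈ pathEdge n i) :
    i ≤ v ∧ (v : ℕ) ≤ i + 1 := by
  rcases Sym2.mem_iff.1 hv with rfl | rfl <;>
    simp [Nat.mod_eq_of_lt hi, Nat.mod_eq_of_lt (show i < n by omega)]

theorem inf_pathEdge {i : ℕ} (hi : i + 1 < n) : ((pathEdge n i).inf : ℕ) = i := by
  simp [pathEdge, Nat.mod_eq_of_lt hi, Nat.mod_eq_of_lt (show i < n by omega)]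

theorem shareVertex_pathEdge_add_one (i : ℕ) : shareVertex (pathEdge n i) (pathEdge n (i + 1)) :=
  ⟨_, Sym2.mem_mk_right _ _, Sym2.mem_mk_left _ _⟩

theorem exists_pathEdge_eq {e : Sym2 (Fin n)} (he : e ∈ (pathGraph n).edgeSet) :
    ∃ i, i + 1 < n ∧ pathEdge n i = e := by
  induction e using Sym2.ind with
  | _ u v =>
    rcases pathGraph_adj.1 he with h | h
    · refine ⟨u, h ▸ v.isLt, ?_⟩
      rw [pathEdge, h, Fin.ofNat_val_eq_self, Fin.ofNat_val_eq_self]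
    · refine ⟨v, h ▸ u.isLt, ?_⟩
      rw [pathEdge, h, Fin.ofNat_val_eq_self, Fin.ofNat_val_eq_self, Sym2.eq_swap]

theorem inf_add_one_lt {e : Sym2 (Fin n)} (he : e ∈ (pathGraph n).edgeSet) :
    (e.inf : ℕ) + 1 < n := by
  obtain ⟨i, hi, rfl⟩ := exists_pathEdge_eq he
  rwa [inf_pathEdge hi]

theorem injOn_inf_edgeSet :
    Set.InjOn (fun e : Sym2 (Fin n) => (e.inf : ℕ)) (pathGraph n).edgeSet := by
  intro e he f hf hef
  obtain ⟨i, hi, rfl⟩ := exists_pathEdge_eq he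
  obtain ⟨j, hj, rfl⟩ := exists_pathEdge_eq hf
  simp only [inf_pathEdge hi, inf_pathEdge hj] at hef
  rw [hef]

theorem ne_and_shareVertex_of_inf_eq_add_one {e f : Sym2 (Fin n)}
    (he : e ∈ (pathGraph n).edgeSet) (hf : f ∈ (pathGraph n).edgeSet)
    (h : (f.inf : ℕ) = e.inf + 1) : e ≠ f ∧ shareVertex e f := by
  refine ⟨fun hef => by subst hef; omega, ?_⟩
  obtain ⟨i, hi, rfl⟩ := exists_pathEdge_eq he
  obtain ⟨j, hj, rfl⟩ := exists_pathEdge_eq hf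
  rw [inf_pathEdge hi, inf_pathEdge hj] at h
  subst h
  exact shareVertex_pathEdge_add_one i

theorem image_inf_subset_range {A : Finset (Sym2 (Fin n))} (hA : ↑A ⊆ (pathGraph n).edgeSet) :
    A.image (fun e => (e.inf : ℕ)) ⊆ range (n - 1) := by
  intro i hi
  obtain ⟨e, he, rfl⟩ := mem_image.1 hi
  have := inf_add_one_lt (hA he)
  rw [mem_range]
  omega

theorem card_image_inf {A : Finset (Sym2 (Fin n))} (hA : ↑A ⊆ (pathGraph n).edgeSet) :
    #(A.image fun e => (e.inf : ℕ)) = #A :=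
  card_image_of_injOn (injOn_inf_edgeSet.mono hA)

theorem add_one_notMem_image_inf {A B : Finset (Sym2 (Fin n))}
    (hA : ↑A ⊆ (pathGraph n).edgeSet) (hB : ↑B ⊆ (pathGraph n).edgeSet)
    (h : ∀ e ∈ A, ∀ f ∈ B, e ≠ f → ¬ shareVertex e f) :
    ∀ i ∈ A.image (fun e => (e.inf : ℕ)), i + 1 ∉ B.image (fun e => (e.inf : ℕ)) := by
  intro i hi hiB
  obtain ⟨e, he, rfl⟩ := mem_image.1 hi
  obtain ⟨f, hf, hfe⟩ := mem_image.1 hiB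
  obtain ⟨hne, hshare⟩ := ne_and_shareVertex_of_inf_eq_add_one (hA he) (hB hf) hfe
  exact h e he f hf hne hshare

theorem coe_image_pathEdge_subset_edgeSet {s : Finset ℕ} (hs : s ⊆ range (n - 1)) :
    ↑(s.image (pathEdge n)) ⊆ (pathGraph n).edgeSet := by
  intro e he
  obtain ⟨i, hi, rfl⟩ := mem_image.1 he
  have := mem_range.1 (hs hi)
  exact pathEdge_mem_edgeSet (by omega)

theorem card_image_pathEdge {s : Finset ℕ} (hs : s ⊆ range (n - 1)) :
    #(s.image (pathEdge n)) = #s := by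
  refine card_image_of_injOn fun i hi j hj hij => ?_
  have hi' := mem_range.1 (hs hi)
  have hj' := mem_range.1 (hs hj)
  have := congrArg (fun e : Sym2 (Fin n) => (e.inf : ℕ)) hij
  simpa only [inf_pathEdge (show i + 1 < n by omega), inf_pathEdge (show j + 1 < n by omega)]
    using this

theorem superLineComplete_pathGraph {r : ℕ} (h : n ≤ 2 * r) :
    SuperLineComplete (pathGraph n) r := by
  intro A B hA hB hAr hBr hAB
  by_contra! hAB_far
  have hBA_far : ∀ f ∈ B, ∀ e ∈ A, f ≠ e → ¬ shareVertex f e :=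
    fun f hf e he hne ⟨v, hvf, hve⟩ => hAB_far e he f hf hne.symm ⟨v, hve, hvf⟩
  have hST := eq_of_add_one_notMem_of_lt_card_add_card (m := n - 1)
    (image_inf_subset_range hA) (image_inf_subset_range hB)
    (by rw [card_image_inf hA, card_image_inf hB]; have := NeZero.pos n; omega)
    (add_one_notMem_image_inf hA hB hAB_far) (add_one_notMem_image_inf hB hA hBA_far)
  refine hAB (coe_inj.1 ((injOn_inf_edgeSet.image_eq_image_iff hA hB).1 ?_))
  rw [← coe_image, ← coe_image, hST]

theorem not_superLineComplete_pathGraph {r : ℕ} (hr : 0 < r) (h : 2 * r + 1 < n) :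
    ¬ SuperLineComplete (pathGraph n) r := by
  have hfirst : range r ⊆ range (n - 1) := range_subset_range.2 (by omega)
  have hlast : Ico (n - 1 - r) (n - 1) ⊆ range (n - 1) := fun i hi => by
    simp only [mem_Ico, mem_range] at hi ⊢
    omega
  refine not_superLineComplete_of_forall_not_shareVertex
    (coe_image_pathEdge_subset_edgeSet hfirst) (coe_image_pathEdge_subset_edgeSet hlast)
    (by rw [card_image_pathEdge hfirst, card_range])
    (by rw [card_image_pathEdge hlast, Nat.card_Ico]; omega) hr ?_
  intro e he f hf ⟨v, hve, hvf⟩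
  obtain ⟨i, hi, rfl⟩ := mem_image.1 he
  obtain ⟨j, hj, rfl⟩ := mem_image.1 hf
  simp only [mem_range, mem_Ico] at hi hj
  have := val_mem_pathEdge (by omega) hve
  have := val_mem_pathEdge (by omega) hvf
  omega

end PathGraph

theorem lc_path_even (n : ℕ) (hn : 2 ≤ n) (he : Even n) :
    lcIs (SimpleGraph.pathGraph n) (n / 2) := by
  obtain ⟨k, rfl⟩ := he
  have : NeZero (k + k) := ⟨by omega⟩
  rw [show (k + k) / 2 = k by omega]
  refine ⟨⟨by omega, superLineComplete_pathGraph (by omega)⟩, fun r ⟨hr, hcomplete⟩ => ?_⟩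
  by_contra! hrk
  exact not_superLineComplete_pathGraph hr (by omega) hcomplete
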